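/- Let q = ef + 1 ≡ 1 (mod 4) be a prime power with f = 2 and e = (q−1)/2 even, and let C₀²′ = {C₀^e, C₂^e, …, C_{e−2}^e} be the family of cyclotomic classes of order e partitioning the set C₀² of nonzero squares. Then: (i) when q ≡ 1 (mod 8), C₀²′ is a (q, (q−1)/4, 2, 1, 0)-disjoint partial difference family and a (q, (q−1)/4, 2, (q−9)/4, (q−1)/4)-external partial difference family; (ii) when q ≡ 5 (mod 8), C₀²′ is a (q, (q−1)/4, 2, 0, 1)-disjoint partial difference family and a (q, (q−1)/4, 2, (q−5)/4)-external difference family. -/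

import Mathlib

open Finset

section Defs

variable {G : Type*} [AddGroup G] [DecidableEq G]

/-- The multiset of internal differences `x - y` (`x ≠ y`) of a finset. -/
def intDiff (D : Finset G) : Multiset G :=
  ((D ×ˢ D).filter fun p => p.1 ≠ p.2).val.map fun p => p.1 - p.2

/-- The multiset of external differences `x - y`, `x ∈ D₁`, `y ∈ D₂`. -/
def extDiff (D₁ D₂ : Finset G) : Multiset G :=
  (D₁ ×ˢ D₂).val.map fun p => p.1 - p.2

variable {ι : Type*} [Fintype ι] [DecidableEq ι]

/-- The multiset of all internal differences of a family of sets. -/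
def famInt (D : ι → Finset G) : Multiset G := ∑ i, intDiff (D i)

/-- The multiset of all external differences between distinct members of a family of sets. -/
def famExt (D : ι → Finset G) : Multiset G :=
  ∑ i, ∑ j, if j = i then 0 else extDiff (D i) (D j)

/-- The union of the members of a family of sets. -/
def famU (D : ι → Finset G) : Finset G := Finset.univ.biUnion D

variable [Fintype G]

/-- `D` is an `(n,k,λ)`-difference set: `Δ(D) = λ(G*)`. -/
def IsDS (n k : ℕ) (lam : ℤ) (D : Finset G) : Prop :=
  Fintype.card G = n ∧ D.card = k ∧
    ∀ x : G, ((intDiff D).count x : ℤ) = if x = 0 then 0 else lam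

/-- `P` is an `(n,k,λ,μ)`-partial difference set: `Δ(P) = λ(P) + μ(G* \ P)`. -/
def IsPDS (n k : ℕ) (lam mu : ℤ) (P : Finset G) : Prop :=
  Fintype.card G = n ∧ P.card = k ∧
    ∀ x : G, ((intDiff P).count x : ℤ) =
      if x ∈ P then lam else if x = 0 then 0 else mu

/-- `D` is a family of `m` pairwise disjoint `k`-subsets of a group of order `n`. -/
def FamShape (n m k : ℕ) (D : ι → Finset G) : Prop :=
  Fintype.card G = n ∧ Fintype.card ι = m ∧ (∀ i, (D i).card = k) ∧
    ∀ i j, i ≠ j → Disjoint (D i) (D j)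

/-- `(n,m,k,λ)`-disjoint difference family: `⋃ᵢ Δ(Dᵢ) = λ(G*)`. -/
def IsDDF (n m k : ℕ) (lam : ℤ) (D : ι → Finset G) : Prop :=
  FamShape n m k D ∧
    ∀ x : G, ((famInt D).count x : ℤ) = if x = 0 then 0 else lam

/-- `(n,m,k,λ)`-external difference family: `⋃_{i≠j} Δ(Dᵢ,Dⱼ) = λ(G*)`. -/
def IsEDF (n m k : ℕ) (lam : ℤ) (D : ι → Finset G) : Prop :=
  FamShape n m k D ∧
    ∀ x : G, ((famExt D).count x : ℤ) = if x = 0 then 0 else lam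

/-- `(n,m,k,λ,μ)`-disjoint partial difference family:
sets in `G*`, `⋃ᵢ Δ(Dᵢ) = λ(S) + μ(G* \ S)` where `S = ⋃ᵢ Dᵢ`. -/
def IsDPDF (n m k : ℕ) (lam mu : ℤ) (D : ι → Finset G) : Prop :=
  FamShape n m k D ∧ (∀ i, (0 : G) ∉ D i) ∧
    ∀ x : G, ((famInt D).count x : ℤ) =
      if x ∈ famU D then lam else if x = 0 then 0 else mu

/-- `(n,m,k,λ,μ)`-external partial difference family:
sets in `G*`, `⋃_{i≠j} Δ(Dᵢ,Dⱼ) = λ(S) + μ(G* \ S)` where `S = ⋃ᵢ Dᵢ`. -/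
def IsEPDF (n m k : ℕ) (lam mu : ℤ) (D : ι → Finset G) : Prop :=
  FamShape n m k D ∧ (∀ i, (0 : G) ∉ D i) ∧
    ∀ x : G, ((famExt D).count x : ℤ) =
      if x ∈ famU D then lam else if x = 0 then 0 else mu

end Defs

section FieldDefs

variable {F : Type*} [Field F] [DecidableEq F]

/-- `α` is a primitive element: every nonzero element is a power of `α`. -/
def IsPrimitiveElt (α : F) : Prop := ∀ x : F, x ≠ 0 → ∃ k : ℕ, x = α ^ k

/-- The coset `α^i⟨α^e⟩` of the cyclotomic class of order `e` (of size `f`). -/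
def cyclo (α : F) (e f i : ℕ) : Finset F :=
  (Finset.range f).image fun j => α ^ (i + e * j)

/-- The cyclotomic number `(i,j)_e`: the number of pairs `(zᵢ, zⱼ) ∈ Cᵢ × Cⱼ` with `zᵢ + 1 = zⱼ`. -/
def cycNum (α : F) (e f i j : ℕ) : ℕ :=
  ((cyclo α e f i ×ˢ cyclo α e f j).filter fun p => p.1 + 1 = p.2).card

/-- `Φᵢ = {x ∈ C₀^e : x ≠ 1, x - 1 ∈ α^i C₀^ε}`. -/
def Phi (α : F) (e f ε ρ i : ℕ) : Finset F :=
  (cyclo α e f 0).filter fun x => x ≠ 1 ∧ x - 1 ∈ cyclo α ε ρ i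

/-- `φᵢ = |Φᵢ|`. -/
def phi (α : F) (e f ε ρ i : ℕ) : ℕ := (Phi α e f ε ρ i).card

end FieldDefs

/-!
With `f = 2` and `α ^ e = -1`, each class `C_{2i}^e = {α ^ (2i), α ^ (2i + e)}` is a pair
`{a, -a}`, and these pairs partition the set `Q` of nonzero squares. Hence the internal
differences of the family are exactly `2Q`, while internal and external differences together
are the differences of `Q`, i.e. of the Paley partial difference set: a nonzero `x` occurs
`(q - 5) / 4` times if `x ∈ Q` and `(q - 1) / 4` times otherwise. This count comes from the Jacobi
sum `J(χ, χ) = -χ(-1)` of the quadratic character, through `∑ b, χ b χ (b + x) = -1`. Finally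
`2Q = Q` when `2` is a square (`q ≡ 1 mod 8`) and `2Q = G* \ Q` otherwise (`q ≡ 5 mod 8`).
-/

open Function

theorem val_biUnion_univ {α ι : Type*} [DecidableEq α] [Fintype ι] {t : ι → Finset α}
    (ht : Pairwise (Disjoint on t)) : (univ.biUnion t).val = ∑ i, (t i).val := by
  rw [← disjiUnion_eq_biUnion _ _ fun i _ j _ hij => ht hij]
  rfl

section DifferenceMultisets

variable {G : Type*} [AddGroup G] [DecidableEq G]

theorem count_zero_intDiff (D : Finset G) : (intDiff D).count 0 = 0 := by
  simp [intDiff, sub_eq_zero]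

theorem intDiff_pair {a b : G} (h : a ≠ b) : intDiff ({a, b} : Finset G) = {a - b, b - a} := by
  have : ({a, b} ×ˢ {a, b} : Finset (G × G)).filter (fun p => p.1 ≠ p.2) = {(a, b), (b, a)} := by
    ext ⟨x, y⟩
    simp only [mem_filter, mem_product, mem_insert, mem_singleton, Prod.mk.injEq]
    grind
  rw [intDiff, this, insert_val_of_notMem (by simp [h])]
  rfl

theorem intDiff_famU {ι : Type*} [Fintype ι] [DecidableEq ι] {D : ι → Finset G}
    (hD : Pairwise (Disjoint on D)) : intDiff (famU D) = famInt D + famExt D := by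
  have hterm : ∀ i j, ((D i ×ˢ D j).filter fun p => p.1 ≠ p.2).val.map (fun p => p.1 - p.2) =
      (if j = i then intDiff (D i) else 0) + if j = i then 0 else extDiff (D i) (D j) := by
    intro i j
    by_cases hji : j = i
    · subst hji
      simp [intDiff]
    · rw [if_neg hji, if_neg hji, zero_add, extDiff, filter_true_of_mem]
      rintro p hp hpe
      exact disjoint_left.mp (hD (Ne.symm hji)) (mem_product.mp hp).1
        (hpe ▸ (mem_product.mp hp).2)
  have hprod : famU D ×ˢ famU D = univ.biUnion fun ij : ι × ι => D ij.1 ×ˢ D ij.2 := by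
    ext p
    simp [famU]
  have hdisj : Pairwise (Disjoint on
      fun ij : ι × ι => (D ij.1 ×ˢ D ij.2).filter fun p => p.1 ≠ p.2) := by
    rintro ⟨i, j⟩ ⟨i', j'⟩ hne
    refine Disjoint.mono (filter_subset _ _) (filter_subset _ _) (disjoint_product.mpr ?_)
    by_cases hi : i = i'
    · subst hi
      exact Or.inr (hD fun hj : j = j' => hne (hj ▸ rfl))
    · exact Or.inl (hD hi)
  rw [intDiff, hprod, filter_biUnion, val_biUnion_univ hdisj, ← Multiset.coe_mapAddMonoidHom,
    map_sum, Fintype.sum_prod_type]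
  simp only [Multiset.coe_mapAddMonoidHom, hterm, sum_add_distrib, sum_ite_eq', mem_univ, if_true,
    famInt, famExt]

theorem count_zero_famInt {ι : Type*} [Fintype ι] (D : ι → Finset G) :
    (famInt D).count 0 = 0 := by
  simp [famInt, Multiset.count_sum', count_zero_intDiff]

theorem count_zero_famExt {ι : Type*} [Fintype ι] [DecidableEq ι] {D : ι → Finset G}
    (hD : Pairwise (Disjoint on D)) : (famExt D).count 0 = 0 := by
  have := congrArg (Multiset.count 0) (intDiff_famU hD)
  rwa [count_zero_intDiff, Multiset.count_add, count_zero_famInt, zero_add, eq_comm] at this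

end DifferenceMultisets

section AddCommGroup

variable {G : Type*} [AddCommGroup G] [DecidableEq G]

theorem famInt_eq_map_two_nsmul {ι : Type*} [Fintype ι] {D : ι → Finset G}
    (hdisj : Pairwise (Disjoint on D)) (hD : ∀ i, ∃ a, a ≠ -a ∧ D i = {a, -a}) :
    famInt D = (famU D).val.map (2 • ·) := by
  have hpair : ∀ i, intDiff (D i) = (D i).val.map (2 • ·) := by
    intro i
    obtain ⟨a, ha, hDi⟩ := hD i
    rw [hDi, intDiff_pair ha, insert_val_of_notMem (by simpa using ha)]
    simp [two_nsmul]
    abel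
  rw [famInt, famU, val_biUnion_univ hdisj, ← Multiset.coe_mapAddMonoidHom, map_sum]
  exact sum_congr rfl fun i _ => hpair i

theorem count_intDiff_eq_card (S : Finset G) {x : G} (hx : x ≠ 0) :
    (intDiff S).count x = #{b ∈ S | b + x ∈ S} := by
  rw [intDiff, Multiset.count_map, ← filter_val, filter_filter]
  refine card_nbij' (fun p => p.2) (fun b => (b + x, b)) ?_ ?_ ?_ ?_
  · rintro ⟨a, b⟩ hp
    simp only [coe_filter, mem_product, Set.mem_ofPred_eq] at hp ⊢
    obtain ⟨⟨ha, hb⟩, -, rfl⟩ := hp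
    simpa using ⟨hb, ha⟩
  · intro b hb
    simp only [coe_filter, mem_product, Set.mem_ofPred_eq] at hb ⊢
    exact ⟨⟨hb.2, hb.1⟩, fun h => hx (by simpa using h), by abel⟩
  · rintro ⟨a, b⟩ hp
    simp only [coe_filter, mem_product, Set.mem_ofPred_eq] at hp
    simp [hp.2.2]
  · intro b _
    rfl

end AddCommGroup

theorem ringChar_ne_two_of_card_mod_four {F : Type*} [Field F] [Fintype F]
    (hF : Fintype.card F % 4 = 1) : ringChar F ≠ 2 := by
  rw [Ne, FiniteField.even_card_iff_char_two]
  omega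

section QuadraticCharacter

variable {F : Type*} [Field F] [Fintype F] [DecidableEq F]

local notation "χ" => quadraticChar F

variable (F) in
def nonzeroSquares : Finset F := {x | x ≠ 0 ∧ IsSquare x}

theorem mem_nonzeroSquares_iff_quadraticChar {x : F} :
    x ∈ nonzeroSquares F ↔ χ x = 1 := by
  by_cases hx : x = 0
  · simp [nonzeroSquares, hx]
  · simp only [nonzeroSquares, mem_filter, mem_univ, true_and, ne_eq, hx, not_false_eq_true]
    exact (quadraticChar_one_iff_isSquare hx).symm

theorem sum_quadraticChar_mul_quadraticChar_add (hF : ringChar F ≠ 2) {x : F} (hx : x ≠ 0) :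
    ∑ b, χ b * χ (b + x) = -1 := by
  have hJ : jacobiSum χ χ = -χ (-1) := by
    have := jacobiSum_nontrivial_inv (quadraticChar_ne_one hF)
    rwa [(quadraticChar_isQuadratic F).inv] at this
  calc ∑ b, χ b * χ (b + x)
      = ∑ t, χ (-x * t) * χ (-x * t + x) :=
        (Equiv.sum_comp (Equiv.mulLeft₀ (-x) (neg_ne_zero.mpr hx)) fun b => χ b * χ (b + x)).symm
    _ = ∑ t, χ (-1) * (χ t * χ (1 - t)) := by
        refine sum_congr rfl fun t _ => ?_
        rw [show -x * t + x = x * (1 - t) by ring, show -x * t = -1 * x * t by ring, map_mul,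
          map_mul, map_mul]
        linear_combination (χ (-1) * χ t * χ (1 - t)) * quadraticChar_sq_one hx
    _ = -1 := by
        rw [← mul_sum, ← jacobiSum, hJ]
        linear_combination -quadraticChar_sq_one (neg_ne_zero.mpr one_ne_zero : (-1 : F) ≠ 0)

theorem count_intDiff_nonzeroSquares (hF : Fintype.card F % 4 = 1) {x : F} (hx : x ≠ 0) :
    4 * ((intDiff (nonzeroSquares F)).count x + if x ∈ nonzeroSquares F then 1 else 0) + 1 =
      Fintype.card F := by
  set Q := nonzeroSquares F
  set T := {b ∈ Q | b + x ∈ Q}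
  have hchar := ringChar_ne_two_of_card_mod_four hF
  have hQ : ∀ y, y ∈ Q ↔ χ y = 1 := fun y => mem_nonzeroSquares_iff_quadraticChar
  have hnegx : χ (-x) = χ x := by
    have hneg1 : χ (-1) = 1 := (quadraticChar_one_iff_isSquare (neg_ne_zero.mpr one_ne_zero)).mpr
      (FiniteField.isSquare_neg_one_iff.mpr (by omega))
    rw [neg_eq_neg_one_mul, map_mul, hneg1, one_mul]
  have hxQ : 1 + χ x = 2 * if x ∈ Q then 1 else 0 := by
    rcases quadraticChar_dichotomy hx with h | h <;> simp [hQ, h]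
  have hterm : ∀ b, (1 + χ b) * (1 + χ (b + x)) = 4 * (if b ∈ T then 1 else 0) +
      ((if b = 0 then 1 + χ x else 0) + (if b = -x then 1 + χ x else 0)) := by
    intro b
    by_cases hb0 : b = 0
    · simp [T, hb0, hQ, hx]
    by_cases hbx : b = -x
    · simp [T, hbx, hQ, hx, hnegx]
    have hbx' : b + x ≠ 0 := fun h => hbx (eq_neg_of_add_eq_zero_left h)
    rcases quadraticChar_dichotomy hb0 with h | h <;>
      rcases quadraticChar_dichotomy hbx' with h' | h' <;>
      simp only [T, mem_filter, hQ, h, h', hb0, hbx, if_false] <;> norm_num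
  have hsum : ∑ b, (1 + χ b) * (1 + χ (b + x)) = Fintype.card F - 1 := by
    have hshift : ∑ b, χ (b + x) = 0 := by
      rw [← quadraticChar_sum_zero hchar]
      exact Equiv.sum_comp (Equiv.addRight x) χ
    simp only [add_mul, one_mul, mul_add, mul_one, sum_add_distrib, quadraticChar_sum_zero hchar,
      hshift, sum_quadraticChar_mul_quadraticChar_add hchar hx, sum_const, card_univ, nsmul_eq_mul]
    ring
  simp only [hterm, sum_add_distrib, ← mul_sum, sum_ite_eq', mem_univ, if_true, sum_boole,
    filter_mem_eq_inter, univ_inter, hxQ] at hsum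
  rw [count_intDiff_eq_card Q hx]
  change 4 * (#T + _) + 1 = _
  split_ifs at hsum ⊢ <;> omega

theorem two_inv_mul_mem_nonzeroSquares_iff (h2 : (2 : F) ≠ 0) {x : F} :
    2⁻¹ * x ∈ nonzeroSquares F ↔ x ≠ 0 ∧ (x ∈ nonzeroSquares F ↔ IsSquare (2 : F)) := by
  by_cases hx : x = 0
  · simp [nonzeroSquares, hx]
  have hinv : χ 2⁻¹ = χ 2 := by
    have h1 : χ 2⁻¹ * χ 2 = 1 := by rw [← map_mul, inv_mul_cancel₀ h2, map_one]
    rcases quadraticChar_dichotomy h2 with h | h <;> rw [h] at h1 ⊢ <;> linarith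
  rw [mem_nonzeroSquares_iff_quadraticChar, map_mul, hinv, mem_nonzeroSquares_iff_quadraticChar,
    ← quadraticChar_one_iff_isSquare h2]
  rcases quadraticChar_dichotomy h2 with h | h <;>
    rcases quadraticChar_dichotomy hx with h' | h' <;> simp [h, h', hx]

end QuadraticCharacter

section SquarePairPartition

variable {F : Type*} [Field F] [Fintype F] [DecidableEq F] {ι : Type*} [Fintype ι]

structure IsSquarePairPartition (D : ι → Finset F) : Prop where
  pairwise_disjoint : Pairwise (Disjoint on D)
  exists_eq_pair : ∀ i, ∃ a, a ≠ -a ∧ D i = {a, -a}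
  famU_eq : famU D = nonzeroSquares F

namespace IsSquarePairPartition

variable {D : ι → Finset F}

theorem zero_notMem (hD : IsSquarePairPartition D) (i : ι) : (0 : F) ∉ D i := fun h0 => by
  have : (0 : F) ∈ famU D := mem_biUnion.mpr ⟨i, mem_univ i, h0⟩
  simp [hD.famU_eq, nonzeroSquares] at this

theorem famShape (hD : IsSquarePairPartition D) {q m : ℕ} (hq : Fintype.card F = q)
    (hm : Fintype.card ι = m) : FamShape q m 2 D := by
  refine ⟨hq, hm, fun i => ?_, fun i j => @hD.pairwise_disjoint i j⟩
  obtain ⟨a, ha, hDi⟩ := hD.exists_eq_pair i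
  rw [hDi, card_pair ha]

theorem count_famInt (hD : IsSquarePairPartition D) (hF : ringChar F ≠ 2) {x : F} (hx : x ≠ 0) :
    (famInt D).count x = if (x ∈ nonzeroSquares F ↔ IsSquare (2 : F)) then 1 else 0 := by
  have h2 : (2 : F) ≠ 0 := Ring.two_ne_zero hF
  have htwo : Injective fun y : F => 2 • y := by
    simpa only [two_nsmul, ← two_mul] using mul_right_injective₀ h2
  have hx2 : x = 2 • (2⁻¹ * x) := by rw [two_nsmul, ← two_mul, mul_inv_cancel_left₀ h2]
  conv_lhs => rw [famInt_eq_map_two_nsmul hD.pairwise_disjoint hD.exists_eq_pair, hD.famU_eq,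
    hx2, Multiset.count_map_eq_count' _ _ htwo, Multiset.count_eq_of_nodup (nonzeroSquares F).nodup]
  simp [two_inv_mul_mem_nonzeroSquares_iff h2, hx]

theorem count_famInt_add_count_famExt [DecidableEq ι] (hD : IsSquarePairPartition D)
    (hF : Fintype.card F % 4 = 1) {x : F} (hx : x ≠ 0) :
    4 * ((famInt D).count x + (famExt D).count x + if x ∈ nonzeroSquares F then 1 else 0) + 1 =
      Fintype.card F := by
  rw [← Multiset.count_add, ← intDiff_famU hD.pairwise_disjoint, hD.famU_eq]
  exact count_intDiff_nonzeroSquares hF hx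

variable {q m : ℕ}

theorem isDPDF_of_isSquare_two (hD : IsSquarePairPartition D) (hF : ringChar F ≠ 2)
    (hq : Fintype.card F = q) (hm : Fintype.card ι = m) (h2 : IsSquare (2 : F)) :
    IsDPDF q m 2 1 0 D := by
  refine ⟨hD.famShape hq hm, hD.zero_notMem, fun x => ?_⟩
  rcases eq_or_ne x 0 with rfl | hx
  · simp [count_zero_famInt, hD.famU_eq, nonzeroSquares]
  rw [hD.count_famInt hF hx]
  by_cases hxQ : x ∈ nonzeroSquares F <;> simp [hxQ, h2, hx, hD.famU_eq]

theorem isDPDF_of_not_isSquare_two (hD : IsSquarePairPartition D) (hF : ringChar F ≠ 2)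
    (hq : Fintype.card F = q) (hm : Fintype.card ι = m) (h2 : ¬IsSquare (2 : F)) :
    IsDPDF q m 2 0 1 D := by
  refine ⟨hD.famShape hq hm, hD.zero_notMem, fun x => ?_⟩
  rcases eq_or_ne x 0 with rfl | hx
  · simp [count_zero_famInt, hD.famU_eq, nonzeroSquares]
  rw [hD.count_famInt hF hx]
  by_cases hxQ : x ∈ nonzeroSquares F <;> simp [hxQ, h2, hx, hD.famU_eq]

theorem isEPDF_of_isSquare_two [DecidableEq ι] (hD : IsSquarePairPartition D)
    (hF : Fintype.card F % 4 = 1) (hq : Fintype.card F = q) (hm : Fintype.card ι = m)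
    (h2 : IsSquare (2 : F)) {a b : ℤ} (ha : 4 * a = (q : ℤ) - 9) (hb : 4 * b = (q : ℤ) - 1) :
    IsEPDF q m 2 a b D := by
  refine ⟨hD.famShape hq hm, hD.zero_notMem, fun x => ?_⟩
  rcases eq_or_ne x 0 with rfl | hx
  · simp [count_zero_famExt hD.pairwise_disjoint, hD.famU_eq, nonzeroSquares]
  have hsum := hD.count_famInt_add_count_famExt hF hx
  rw [hD.count_famInt (ringChar_ne_two_of_card_mod_four hF) hx] at hsum
  subst hq
  by_cases hxQ : x ∈ nonzeroSquares F <;> simp [hxQ, h2, hx, hD.famU_eq] at hsum ⊢ <;> omega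

theorem isEDF_of_not_isSquare_two [DecidableEq ι] (hD : IsSquarePairPartition D)
    (hF : Fintype.card F % 4 = 1) (hq : Fintype.card F = q) (hm : Fintype.card ι = m)
    (h2 : ¬IsSquare (2 : F)) {a : ℤ} (ha : 4 * a = (q : ℤ) - 5) : IsEDF q m 2 a D := by
  refine ⟨hD.famShape hq hm, fun x => ?_⟩
  rcases eq_or_ne x 0 with rfl | hx
  · simp [count_zero_famExt hD.pairwise_disjoint]
  have hsum := hD.count_famInt_add_count_famExt hF hx
  rw [hD.count_famInt (ringChar_ne_two_of_card_mod_four hF) hx] at hsum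
  subst hq
  by_cases hxQ : x ∈ nonzeroSquares F <;> simp [hxQ, h2, hx] at hsum ⊢ <;> omega

end IsSquarePairPartition

end SquarePairPartition

section Cyclotomic

variable {F : Type*} [Field F] [DecidableEq F]

theorem cyclo_two (α : F) (e i : ℕ) : cyclo α e 2 i = {α ^ i, α ^ (i + e)} := by
  simp only [cyclo, range_add_one, range_zero, insert_empty, image_insert, image_singleton]
  simp [pair_comm]

variable [Fintype F]

theorem IsPrimitiveElt.isPrimitiveRoot {α : F} (hα : IsPrimitiveElt α)
    (hF : 2 < Fintype.card F) : IsPrimitiveRoot α (Fintype.card F - 1) := by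
  have hα0 : α ≠ 0 := by
    obtain ⟨x, hx, hx1⟩ := exists_mem_ne (s := univ.erase (0 : F))
      (by rw [card_erase_of_mem (mem_univ _), card_univ]; omega) 1
    have hx0 := ne_of_mem_erase hx
    rintro rfl
    obtain ⟨_ | k, hk⟩ := hα x hx0
    · exact hx1 (by simpa using hk)
    · exact hx0 (by simpa using hk)
  have hgen : ∀ v : Fˣ, v ∈ Subgroup.zpowers (Units.mk0 α hα0) := fun v => by
    obtain ⟨k, hk⟩ := hα v v.ne_zero
    exact ⟨k, Units.ext (by simp [hk])⟩
  have := IsPrimitiveRoot.orderOf (Units.mk0 α hα0)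
  rwa [orderOf_eq_card_of_forall_mem_zpowers hgen, Nat.card_eq_fintype_card, Fintype.card_units,
    ← IsPrimitiveRoot.coe_units_iff, Units.val_mk0] at this

theorem famU_cyclo_eq_nonzeroSquares {α : F} {e : ℕ}
    (hα : IsPrimitiveRoot α (2 * e)) (hq : Fintype.card F = 2 * e + 1) (he : Even e) :
    famU (fun i : Fin (e / 2) => cyclo α e 2 (2 * i)) = nonzeroSquares F := by
  obtain ⟨h, rfl⟩ := even_iff_two_dvd.mp he
  have hh : 0 < h := by have := Fintype.one_lt_card (α := F); omega
  have : NeZero (2 * (2 * h)) := ⟨by omega⟩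
  have hα0 : α ≠ 0 := hα.ne_zero (by omega)
  ext x
  simp only [famU, mem_biUnion, mem_univ, true_and, cyclo_two, mem_insert, mem_singleton,
    nonzeroSquares, mem_filter]
  constructor
  · rintro ⟨i, rfl | rfl⟩
    · exact ⟨pow_ne_zero _ hα0, α ^ (i : ℕ), by ring⟩
    · exact ⟨pow_ne_zero _ hα0, α ^ (i + h : ℕ), by ring⟩
  rintro ⟨hx0, y, rfl⟩
  have hy0 : y ≠ 0 := fun hy => hx0 (by rw [hy, zero_mul])
  obtain ⟨k, -, rfl⟩ := hα.eq_pow_of_pow_eq_one (ξ := y) (by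
    simpa [hq] using FiniteField.pow_card_sub_one_eq_one y hy0)
  -- with `k = h * t + r`, `α ^ (2 * k)` is `α ^ (2 * r)` or `α ^ (2 * r + e)` as `t` is even or odd
  have hdiv := Nat.div_add_mod k h
  have hmod := Nat.mod_lt k hh
  rw [← pow_add]
  obtain ⟨s, hs | hs⟩ := Nat.even_or_odd' (k / h)
  · refine ⟨⟨k % h, by omega⟩, Or.inl ?_⟩
    have hk : k + k = 2 * (k % h) + 2 * (2 * h) * s := by rw [hs] at hdiv; linarith
    rw [hk, pow_add, pow_mul α (2 * (2 * h)), hα.pow_eq_one, one_pow, mul_one]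
  · refine ⟨⟨k % h, by omega⟩, Or.inr ?_⟩
    have hk : k + k = 2 * (k % h) + 2 * h + 2 * (2 * h) * s := by rw [hs] at hdiv; linarith
    rw [hk, pow_add, pow_mul α (2 * (2 * h)), hα.pow_eq_one, one_pow, mul_one]

theorem isSquarePairPartition_cyclo {α : F} {e : ℕ} (hα : IsPrimitiveRoot α (2 * e))
    (hq : Fintype.card F = 2 * e + 1) (he : Even e) :
    IsSquarePairPartition fun i : Fin (e / 2) => cyclo α e 2 (2 * i) := by
  have he0 : 0 < e := by have := Fintype.one_lt_card (α := F); omega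
  have hneg : α ^ e = -1 := by
    have h2 := hα.pow_of_dvd he0.ne' (dvd_mul_left _ 2)
    rw [Nat.mul_div_cancel _ he0] at h2
    exact h2.eq_neg_one_of_two_right
  refine ⟨fun i j hij => ?_, fun i => ⟨α ^ (2 * (i : ℕ)), fun hi => ?_, ?_⟩,
    famU_cyclo_eq_nonzeroSquares hα hq he⟩
  · have hij' : (i : ℕ) ≠ j := Fin.val_injective.ne hij
    rw [onFun, cyclo_two, cyclo_two, disjoint_left]
    intro x hx hx'
    simp only [mem_insert, mem_singleton] at hx hx'
    rcases hx with rfl | rfl <;> rcases hx' with hx' | hx' <;>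
      have := hα.pow_inj (by omega) (by omega) hx' <;> omega
  · have := hα.pow_inj (i := 2 * i) (j := 2 * i + e) (by omega) (by omega)
      (hi.trans (by rw [pow_add, hneg, mul_neg_one]))
    omega
  · rw [cyclo_two, pow_add, hneg, mul_neg_one]

end Cyclotomic

/-- Theorem: let `q = 2e+1 ≡ 1 (mod 4)` with `e` even and `f = 2`.  Then (i) when
`q ≡ 1 (mod 8)`, `C₀²′` is a `(q,(q-1)/4,2,1,0)`-DPDF and a
`(q,(q-1)/4,2,(q-9)/4,(q-1)/4)`-EPDF; (ii) when `q ≡ 5 (mod 8)`, `C₀²′` is a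
`(q,(q-1)/4,2,0,1)`-DPDF and a `(q,(q-1)/4,2,(q-5)/4)`-EDF. -/
theorem partition_of_squares_f_two {F : Type*} [Field F] [Fintype F] [DecidableEq F]
    (q e : ℕ) (α : F)
    (hq : Fintype.card F = q) (hα : IsPrimitiveElt α)
    (hef : q = e * 2 + 1) (he : 1 < e) (heven : Even e)
    (hq4 : q % 4 = 1) :
    ∀ D : Fin (e / 2) → Finset F, D = (fun i : Fin (e / 2) => cyclo α e 2 (2 * (i : ℕ))) →
    (q % 8 = 1 →
      IsDPDF q ((q - 1) / 4) 2 1 0 D ∧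
      ∃ a b : ℤ, 4 * a = (q : ℤ) - 9 ∧ 4 * b = (q : ℤ) - 1 ∧
        IsEPDF q ((q - 1) / 4) 2 a b D) ∧
    (q % 8 = 5 →
      IsDPDF q ((q - 1) / 4) 2 0 1 D ∧
      ∃ a : ℤ, 4 * a = (q : ℤ) - 5 ∧ IsEDF q ((q - 1) / 4) 2 a D) := by
  rintro D rfl
  have hroot : IsPrimitiveRoot α (2 * e) := by
    simpa [hq, hef, mul_comm] using hα.isPrimitiveRoot (by omega)
  have hD := isSquarePairPartition_cyclo hroot (by omega) heven
  have hF : Fintype.card F % 4 = 1 := hq ▸ hq4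
  have hchar := ringChar_ne_two_of_card_mod_four hF
  have hm : Fintype.card (Fin (e / 2)) = (q - 1) / 4 := by rw [Fintype.card_fin]; omega
  have hsq2 : IsSquare (2 : F) ↔ q % 8 ≠ 3 ∧ q % 8 ≠ 5 := hq ▸ FiniteField.isSquare_two_iff
  refine ⟨fun h8 => ?_, fun h8 => ?_⟩
  · have h2 : IsSquare (2 : F) := hsq2.mpr (by omega)
    exact ⟨hD.isDPDF_of_isSquare_two hchar hq hm h2, ((q : ℤ) - 9) / 4, ((q : ℤ) - 1) / 4,
      by omega, by omega, hD.isEPDF_of_isSquare_two hF hq hm h2 (by omega) (by omega)⟩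
  · have h2 : ¬IsSquare (2 : F) := fun h => (hsq2.mp h).2 h8
    exact ⟨hD.isDPDF_of_not_isSquare_two hchar hq hm h2, ((q : ℤ) - 5) / 4, by omega,
      hD.isEDF_of_not_isSquare_two hF hq hm h2 (by omega)⟩
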